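/- arXiv:1802.09590 — 3 statements merged into one kernel-verified Lean document; each statement's English description precedes it below -/
import Mathlib

section
/- Let n ≥ 2, let i ∈ {2,…,n}, let p ≥ 0, and let A ∈ ℝ^{n×n} be an elementary bidiagonal matrix, i.e. either A = I + p·E_{i,i−1} or A = I + p·E_{i−1,i}, where E_{k,l} denotes the n×n matrix whose (k,l) entry is 1 and all other entries are 0. Then for every x ∈ ℝ^n one has s^-(Ax) ≤ s^-(x) and s^+(Ax) ≤ s^+(x). -/
open Matrix MeasureTheory Set Polynomial Filter

noncomputable section

/-- Number of sign changes between adjacent entries of a list of reals. -/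
def signChanges : List ℝ → ℕ
  | [] => 0
  | [_] => 0
  | a :: b :: l => (if a * b < 0 then 1 else 0) + signChanges (b :: l)

/-- `s^-(y)`: the number of sign variations in `y` after deleting all zero entries. -/
def sMinus {n : ℕ} (y : Fin n → ℝ) : ℕ :=
  signChanges ((List.ofFn y).filter (fun x => decide (x ≠ 0)))

/-- `s^+(y)`: the maximal number of sign variations in `y` after each zero entry is
replaced by either `+1` or `-1`. -/
def sPlus {n : ℕ} (y : Fin n → ℝ) : ℕ :=
  Finset.univ.sup fun ε : Fin n → Bool =>
    signChanges (List.ofFn fun i => if y i = 0 then (if ε i then (1:ℝ) else -1) else y i)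

/-- A matrix is totally positive if all its minors are positive. -/
def IsTP {n m : ℕ} (A : Matrix (Fin n) (Fin m) ℝ) : Prop :=
  ∀ (k : ℕ) (r : Fin k → Fin n) (c : Fin k → Fin m),
    StrictMono r → StrictMono c → 0 < (A.submatrix r c).det

/-- A matrix is totally nonnegative if all its minors are nonnegative. -/
def IsTN {n m : ℕ} (A : Matrix (Fin n) (Fin m) ℝ) : Prop :=
  ∀ (k : ℕ) (r : Fin k → Fin n) (c : Fin k → Fin m),
    StrictMono r → StrictMono c → 0 ≤ (A.submatrix r c).det

/-- Tridiagonal with nonnegative sub- and super-diagonal entries. -/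
def InM {n : ℕ} (A : Matrix (Fin n) (Fin n) ℝ) : Prop :=
  (∀ i j : Fin n, ((i : ℕ) + 1 < (j : ℕ) ∨ (j : ℕ) + 1 < (i : ℕ)) → A i j = 0) ∧
  (∀ i j : Fin n, ((i : ℕ) = (j : ℕ) + 1 ∨ (j : ℕ) = (i : ℕ) + 1) → 0 ≤ A i j)

/-- Tridiagonal with positive sub- and super-diagonal entries. -/
def InMPlus {n : ℕ} (A : Matrix (Fin n) (Fin n) ℝ) : Prop :=
  (∀ i j : Fin n, ((i : ℕ) + 1 < (j : ℕ) ∨ (j : ℕ) + 1 < (i : ℕ)) → A i j = 0) ∧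
  (∀ i j : Fin n, ((i : ℕ) = (j : ℕ) + 1 ∨ (j : ℕ) = (i : ℕ) + 1) → 0 < A i j)

/-- `A` is measurable and locally essentially bounded on `(a,b)` (entrywise). -/
def GoodCoeff {n : ℕ} (a b : ℝ) (A : ℝ → Matrix (Fin n) (Fin n) ℝ) : Prop :=
  (∀ i j, Measurable fun t => A t i j) ∧
  ∀ K : Set ℝ, K ⊆ Set.Ioo a b → IsCompact K →
    ∃ C : ℝ, ∀ᵐ t ∂volume, t ∈ K → ∀ i j, |A t i j| ≤ C

/-- `Φ` is the transition matrix of `ż = A(t)z` on `(a,b)`, encoded through the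
equivalent integral equation `Φ(t,t0) = I + ∫_{t0}^t A(s)Φ(s,t0) ds`. -/
def IsTransitionOn {n : ℕ} (a b : ℝ) (A : ℝ → Matrix (Fin n) (Fin n) ℝ)
    (Φ : ℝ → ℝ → Matrix (Fin n) (Fin n) ℝ) : Prop :=
  ∀ t0 ∈ Set.Ioo a b, ∀ t ∈ Set.Ioo a b, ∀ i j,
    Φ t t0 i j = (1 : Matrix (Fin n) (Fin n) ℝ) i j + ∫ s in t0..t, (A s * Φ s t0) i j

/-!
Multiplying by `1 + p • single k l 1` (with `k = l + 1`) changes only the entry `x k`, into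
`x k + p * x l`. Since `p ≥ 0`, the new entry is zero, or has the sign of `x k`, or has the sign
of its neighbour `x l`: a zero entry is deleted by `s⁻`, an unchanged sign changes nothing, and an
entry with the sign of its neighbour creates no sign change, so `s⁻` cannot grow. For `s⁺` one
compares maximizing fillings of the zeros in the same way. The transposed matrix is handled by
reversing the order of the coordinates.
-/

open Function
open SignType (sign)

def signChange (a b : ℝ) : ℕ := if a * b < 0 then 1 else 0

theorem signChanges_cons_cons (a b : ℝ) (l : List ℝ) :
    signChanges (a :: b :: l) = signChange a b + signChanges (b :: l) := rfl

@[simp]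
theorem signChanges_singleton (a : ℝ) : signChanges [a] = 0 := rfl

theorem signChange_comm (a b : ℝ) : signChange a b = signChange b a := by
  simp only [signChange, mul_comm]

theorem signChange_congr {a a' b b' : ℝ} (ha : sign a = sign a')
    (hb : sign b = sign b') : signChange a b = signChange a' b' := by
  simp only [signChange, ← sign_eq_neg_one_iff (a := a * b),
    ← sign_eq_neg_one_iff (a := a' * b'), sign_mul, ha, hb]

theorem signChange_le_add {b : ℝ} (hb : b ≠ 0) (a c : ℝ) :
    signChange a c ≤ signChange a b + signChange b c := by
  by_cases hac : a * c < 0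
  · have : a * b < 0 ∨ b * c < 0 := by
      by_contra! h
      nlinarith [mul_nonneg h.1 h.2, mul_self_pos.2 hb]
    rcases this with h | h <;> simp [signChange, hac, h]
  · simp [signChange, hac]

theorem sign_eq_sign_of_mul_pos {a b : ℝ} (h : 0 < a * b) : sign a = sign b := by
  rcases mul_pos_iff.1 h with ⟨ha, hb⟩ | ⟨ha, hb⟩
  · rw [sign_pos ha, sign_pos hb]
  · rw [sign_neg ha, sign_neg hb]

theorem signChanges_congr :
    ∀ {l₁ l₂ : List ℝ}, l₁.map sign = l₂.map sign →
      signChanges l₁ = signChanges l₂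
  | [], [], _ => rfl
  | [_], [_], _ => rfl
  | a :: b :: l₁, a' :: b' :: l₂, h => by
    simp only [List.map_cons, List.cons.injEq] at h
    rw [signChanges_cons_cons, signChanges_cons_cons, signChange_congr h.1 h.2.1,
      signChanges_congr (l₁ := b :: l₁) (l₂ := b' :: l₂) (by simp [h.2.1, h.2.2])]
  | [], _ :: _, h | _ :: _, [], h | [_], _ :: _ :: _, h | _ :: _ :: _, [_], h => by simp at h

theorem signChanges_append_cons (L : List ℝ) (a : ℝ) (R : List ℝ) :
    signChanges (L ++ a :: R) = signChanges (L ++ [a]) + signChanges (a :: R) := by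
  induction L with
  | nil => simp
  | cons x L ih =>
    cases L with
    | nil => simp [signChanges_cons_cons]
    | cons y L =>
      simp only [List.cons_append, signChanges_cons_cons] at ih ⊢
      omega

theorem signChanges_reverse (l : List ℝ) : signChanges l.reverse = signChanges l := by
  induction l with
  | nil => rfl
  | cons a l ih =>
    cases l with
    | nil => rfl
    | cons b l =>
      rw [List.reverse_cons, List.reverse_cons, List.append_assoc, List.singleton_append,
        signChanges_append_cons, ← List.reverse_cons, ih, signChanges_cons_cons,
        signChanges_cons_cons, signChange_comm, signChanges_singleton]
      omega

theorem signChanges_le_cons (a : ℝ) (l : List ℝ) : signChanges l ≤ signChanges (a :: l) := by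
  cases l with
  | nil => exact le_rfl
  | cons b l => rw [signChanges_cons_cons]; omega

theorem signChanges_cons_le_cons_cons {b : ℝ} (hb : b ≠ 0) (a : ℝ) (l : List ℝ) :
    signChanges (a :: l) ≤ signChanges (a :: b :: l) := by
  cases l with
  | nil => exact Nat.zero_le _
  | cons c l =>
    simp only [signChanges_cons_cons]
    have := signChange_le_add hb a c
    omega

theorem signChanges_append_le_append_cons {b : ℝ} (hb : b ≠ 0) (L R : List ℝ) :
    signChanges (L ++ R) ≤ signChanges (L ++ b :: R) := by
  induction L with
  | nil => exact signChanges_le_cons b R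
  | cons a L ih =>
    cases L with
    | nil => exact signChanges_cons_le_cons_cons hb a R
    | cons a' L =>
      simp only [List.cons_append, signChanges_cons_cons] at ih ⊢
      omega

theorem signChanges_append_cons_cons_of_mul_pos {a c : ℝ} (h : 0 < a * c) (L R : List ℝ) :
    signChanges (L ++ a :: c :: R) = signChanges (L ++ a :: R) := by
  have hc : signChanges (c :: R) = signChanges (a :: R) :=
    signChanges_congr (by simp [sign_eq_sign_of_mul_pos h])
  rw [signChanges_append_cons L a (c :: R), signChanges_append_cons L a R,
    signChanges_cons_cons, hc, signChange, if_neg h.not_gt, zero_add]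

theorem signChanges_append_cons_cons_le {a b t : ℝ} (h : 0 < a * b) (ht : t ≠ 0)
    (L R : List ℝ) : signChanges (L ++ a :: b :: R) ≤ signChanges (L ++ a :: t :: R) := by
  rw [signChanges_append_cons_cons_of_mul_pos h]
  simpa using signChanges_append_le_append_cons ht (L ++ [a]) R

def nonzeros (l : List ℝ) : List ℝ := l.filter fun x => decide (x ≠ 0)

theorem signChanges_nonzeros_append_le (b : ℝ) (L R : List ℝ) :
    signChanges (nonzeros (L ++ R)) ≤ signChanges (nonzeros (L ++ b :: R)) := by
  by_cases hb : b = 0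
  · simp [nonzeros, hb]
  · simpa [nonzeros, hb] using signChanges_append_le_append_cons hb (nonzeros L) (nonzeros R)

theorem signChanges_nonzeros_append_cons_cons {a c : ℝ} (hc : c = 0 ∨ 0 < a * c)
    (L R : List ℝ) :
    signChanges (nonzeros (L ++ a :: c :: R)) = signChanges (nonzeros (L ++ a :: R)) := by
  rcases hc with rfl | hac
  · simp [nonzeros, List.filter_cons]
  · have ha : a ≠ 0 := left_ne_zero_of_mul hac.ne'
    have hc : c ≠ 0 := right_ne_zero_of_mul hac.ne'
    simpa [nonzeros, ha, hc] using
      signChanges_append_cons_cons_of_mul_pos hac (nonzeros L) (nonzeros R)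

theorem signChanges_nonzeros_append_cons_congr {b c : ℝ}
    (h : sign c = sign b) (L R : List ℝ) :
    signChanges (nonzeros (L ++ c :: R)) = signChanges (nonzeros (L ++ b :: R)) := by
  apply signChanges_congr
  by_cases hb : b = 0
  · have hc : c = 0 := sign_eq_zero_iff.1 (by simp [h, hb])
    simp [nonzeros, hb, hc]
  · have hc : c ≠ 0 := fun hc => hb (sign_eq_zero_iff.1 (by simp [← h, hc]))
    simp [nonzeros, hb, hc, h]

theorem signChanges_nonzeros_add_mul_le {p : ℝ} (hp : 0 ≤ p) (L R : List ℝ) (a b : ℝ) :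
    signChanges (nonzeros (L ++ a :: (b + p * a) :: R)) ≤
      signChanges (nonzeros (L ++ a :: b :: R)) := by
  set c := b + p * a with hc_def
  by_cases hcb : 0 < c * b
  · exact le_of_eq <| by
      simpa using signChanges_nonzeros_append_cons_congr (sign_eq_sign_of_mul_pos hcb) (L ++ [a]) R
  · have hc : c = 0 ∨ 0 < a * c := by
      refine or_iff_not_imp_left.2 fun hc => ?_
      have hcc : c * c = c * b + p * (a * c) := by rw [hc_def]; ring
      nlinarith [mul_self_pos.2 hc]
    rw [signChanges_nonzeros_append_cons_cons hc]
    simpa using signChanges_nonzeros_append_le b (L ++ [a]) R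

section Vectors

variable {n : ℕ}

theorem List.ofFn_update {α : Type*} (f : Fin n → α) (k : Fin n) (v : α) :
    List.ofFn (update f k v) = (List.ofFn f).set k v := by
  apply List.ext_getElem (by simp)
  intro i _ hi
  rw [List.getElem_ofFn, List.getElem_set, List.getElem_ofFn, update_apply]
  simp only [Fin.ext_iff, eq_comm (a := (k : ℕ))]

theorem List.ofFn_update_of_val_eq_succ {α : Type*} (f : Fin n → α) {k l : Fin n}
    (hkl : (k : ℕ) = l + 1) (v : α) :
    List.ofFn (update f k v) = (List.ofFn f).take l ++ f l :: v :: (List.ofFn f).drop (k + 1) := by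
  rw [List.ofFn_update, List.set_eq_take_cons_drop v (by simp), hkl, List.take_add_one]
  simp

theorem List.ofFn_comp_rev {α : Type*} (f : Fin n → α) :
    List.ofFn (f ∘ Fin.rev) = (List.ofFn f).reverse := by
  apply List.ext_getElem (by simp)
  intro i _ hi
  rw [List.getElem_reverse]
  simp only [List.getElem_ofFn, Function.comp_apply]
  congr 1
  ext
  simp only [Fin.val_rev, List.length_ofFn]
  omega

theorem Matrix.mulVec_one_add_smul_single {R ι : Type*} [Semiring R] [Fintype ι] [DecidableEq ι]
    (p : R) (i j : ι) (x : ι → R) :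
    (1 + p • Matrix.single i j 1) *ᵥ x = update x i (x i + p * x j) := by
  ext r
  by_cases hr : r = i
  · subst hr; simp [Matrix.add_mulVec, Matrix.single_mulVec]
  · simp [Matrix.add_mulVec, Matrix.single_mulVec, hr]

end Vectors

section SignVariations

variable {n : ℕ}

theorem sMinus_eq_signChanges_nonzeros (x : Fin n → ℝ) :
    sMinus x = signChanges (nonzeros (List.ofFn x)) := rfl

theorem signChanges_ofFn_le_update {f : Fin n → ℝ} {k l : Fin n} (hkl : (k : ℕ) = l + 1)
    (h : 0 < f l * f k) {t : ℝ} (ht : t ≠ 0) :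
    signChanges (List.ofFn f) ≤ signChanges (List.ofFn (update f k t)) := by
  conv_lhs => rw [← update_eq_self k f, List.ofFn_update_of_val_eq_succ f hkl]
  rw [List.ofFn_update_of_val_eq_succ f hkl]
  exact signChanges_append_cons_cons_le h ht _ _

theorem sMinus_update_add_mul_prev_le {p : ℝ} (hp : 0 ≤ p) (x : Fin n → ℝ) {k l : Fin n}
    (hkl : (k : ℕ) = l + 1) : sMinus (update x k (x k + p * x l)) ≤ sMinus x := by
  conv_rhs => rw [← update_eq_self k x]
  simp only [sMinus_eq_signChanges_nonzeros, List.ofFn_update_of_val_eq_succ x hkl]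
  exact signChanges_nonzeros_add_mul_le hp _ _ _ _

def fillZeros (ε : Fin n → Bool) (x : Fin n → ℝ) : Fin n → ℝ :=
  fun i => if x i = 0 then (if ε i then 1 else -1) else x i

theorem sPlus_eq_sup_fillZeros (x : Fin n → ℝ) :
    sPlus x = Finset.univ.sup fun ε => signChanges (List.ofFn (fillZeros ε x)) := rfl

/-- Up to the signs of their entries, these are the vectors `fillZeros ε x`, over which
`sPlus x` takes its maximum. -/
def IsSignFilling (z x : Fin n → ℝ) : Prop :=
  ∀ i, z i ≠ 0 ∧ (x i ≠ 0 → 0 < z i * x i)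

theorem IsSignFilling.signChanges_le_sPlus {z x : Fin n → ℝ} (hz : IsSignFilling z x) :
    signChanges (List.ofFn z) ≤ sPlus x := by
  let ε : Fin n → Bool := fun i => decide (0 < z i)
  have hsign : ∀ i, sign (z i) = sign (fillZeros ε x i) := by
    intro i
    by_cases hx : x i = 0
    · rcases (hz i).1.lt_or_gt with hneg | hpos
      · simp [fillZeros, ε, hx, hneg.not_gt, sign_neg hneg]
      · simp [fillZeros, ε, hx, hpos, sign_pos hpos]
    · simpa [fillZeros, hx] using sign_eq_sign_of_mul_pos ((hz i).2 hx)
  calc signChanges (List.ofFn z) = signChanges (List.ofFn (fillZeros ε x)) :=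
        signChanges_congr (by simp only [List.map_ofFn]; exact congrArg List.ofFn (funext hsign))
    _ ≤ sPlus x := by
      rw [sPlus_eq_sup_fillZeros]
      exact Finset.le_sup (f := fun ε => signChanges (List.ofFn (fillZeros ε x)))
        (Finset.mem_univ ε)

theorem exists_isSignFilling_signChanges_eq_sPlus (x : Fin n → ℝ) :
    ∃ z, IsSignFilling z x ∧ signChanges (List.ofFn z) = sPlus x := by
  obtain ⟨ε, -, hε⟩ := Finset.exists_mem_eq_sup Finset.univ Finset.univ_nonempty
    fun ε => signChanges (List.ofFn (fillZeros ε x))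
  refine ⟨fillZeros ε x, fun i => ?_, hε.symm⟩
  by_cases hx : x i = 0
  · simp only [fillZeros, hx]; split_ifs <;> norm_num
  · simp [fillZeros, hx]

theorem sPlus_update_add_mul_prev_le {p : ℝ} (hp : 0 ≤ p) (x : Fin n → ℝ) {k l : Fin n}
    (hkl : (k : ℕ) = l + 1) : sPlus (update x k (x k + p * x l)) ≤ sPlus x := by
  set y := update x k (x k + p * x l)
  have hyk : y k = x k + p * x l := update_self _ _ _
  have hy : ∀ i ≠ k, y i = x i := fun i hi => update_of_ne hi _ _
  have hlk : l ≠ k := fun h => by simp [h] at hkl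
  obtain ⟨z, hz, hzy⟩ := exists_isSignFilling_signChanges_eq_sPlus y
  have hzx : ∀ i ≠ k, z i ≠ 0 ∧ (x i ≠ 0 → 0 < z i * x i) :=
    fun i hi => hy i hi ▸ hz i
  rw [← hzy]
  by_cases hk : x k = 0 ∨ 0 < z k * x k
  · refine IsSignFilling.signChanges_le_sPlus fun i => ?_
    by_cases hi : i = k
    · subst hi; exact ⟨(hz i).1, hk.resolve_left⟩
    · exact hzx i hi
  rw [not_or, not_lt] at hk
  obtain ⟨hxk, hzxk⟩ := hk
  replace hzxk : z k * x k < 0 := hzxk.lt_of_ne (mul_ne_zero (hz k).1 hxk)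
  -- `z k` has the sign of `y k` (or `y k = 0`) but not that of `x k`, so it has the sign of `x l`
  have hzyk : 0 ≤ z k * y k := by
    by_cases hyk0 : y k = 0
    · simp [hyk0]
    · exact ((hz k).2 hyk0).le
  have hzxl : 0 < z k * x l := by
    rw [hyk] at hzyk
    nlinarith
  have hzl : 0 < z l * x l := (hzx l hlk).2 (right_ne_zero_of_mul hzxl.ne')
  have hzlk : 0 < z l * z k := by nlinarith [mul_pos hzl hzxl, mul_self_nonneg (x l)]
  calc signChanges (List.ofFn z) ≤ signChanges (List.ofFn (update z k (x k))) :=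
        signChanges_ofFn_le_update hkl hzlk hxk
    _ ≤ sPlus x := by
      refine IsSignFilling.signChanges_le_sPlus fun i => ?_
      by_cases hi : i = k
      · subst hi; simpa using mul_self_pos.2 hxk
      · simpa [hi] using hzx i hi

end SignVariations

section Reversal

variable {n : ℕ}

theorem sMinus_comp_rev (x : Fin n → ℝ) : sMinus (x ∘ Fin.rev) = sMinus x := by
  rw [sMinus_eq_signChanges_nonzeros, sMinus_eq_signChanges_nonzeros, List.ofFn_comp_rev,
    nonzeros, List.filter_reverse, signChanges_reverse, nonzeros]

theorem IsSignFilling.comp_rev {z x : Fin n → ℝ} (hz : IsSignFilling z x) :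
    IsSignFilling (z ∘ Fin.rev) (x ∘ Fin.rev) :=
  fun i => hz i.rev

theorem sPlus_comp_rev_le (x : Fin n → ℝ) : sPlus (x ∘ Fin.rev) ≤ sPlus x := by
  obtain ⟨z, hz, hzx⟩ := exists_isSignFilling_signChanges_eq_sPlus (x ∘ Fin.rev)
  rw [← hzx, ← signChanges_reverse, ← List.ofFn_comp_rev]
  simpa [comp_def] using hz.comp_rev.signChanges_le_sPlus

theorem sPlus_comp_rev (x : Fin n → ℝ) : sPlus (x ∘ Fin.rev) = sPlus x :=
  (sPlus_comp_rev_le x).antisymm <| by simpa [comp_def] using sPlus_comp_rev_le (x ∘ Fin.rev)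

theorem update_comp_rev {α : Type*} (x : Fin n → α) (i : Fin n) (v : α) :
    update x i v ∘ Fin.rev = update (x ∘ Fin.rev) i.rev v :=
  update_comp_equiv x Fin.revPerm i v

end Reversal

theorem sMinus_le_and_sPlus_le_of_update_add_mul_next {n : ℕ} {p : ℝ} (hp : 0 ≤ p)
    (x : Fin n → ℝ) {k l : Fin n} (hkl : (k : ℕ) = l + 1) :
    sMinus (update x l (x l + p * x k)) ≤ sMinus x ∧
      sPlus (update x l (x l + p * x k)) ≤ sPlus x := by
  have hrev : ((Fin.rev l : Fin n) : ℕ) = Fin.rev k + 1 := by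
    simp only [Fin.val_rev]; omega
  have h := And.intro (sMinus_update_add_mul_prev_le hp (x ∘ Fin.rev) hrev)
    (sPlus_update_add_mul_prev_le hp (x ∘ Fin.rev) hrev)
  rw [← sMinus_comp_rev x, ← sPlus_comp_rev x, ← sMinus_comp_rev, ← sPlus_comp_rev,
    update_comp_rev]
  simpa using h

/-- `k, l` are 0-indexed with `k = l + 1`, so `(k, l)` runs over the subdiagonal positions
`(i, i-1)`, `i ∈ {2,…,n}` (1-indexed). -/
theorem stmt0_general {n : ℕ} (p : ℝ) (hp : 0 ≤ p) (k l : Fin n)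
    (hkl : (k : ℕ) = (l : ℕ) + 1)
    (A : Matrix (Fin n) (Fin n) ℝ)
    (hA : A = 1 + p • Matrix.single k l 1 ∨
          A = 1 + p • Matrix.single l k 1)
    (x : Fin n → ℝ) :
    sMinus (A.mulVec x) ≤ sMinus x ∧ sPlus (A.mulVec x) ≤ sPlus x := by
  rcases hA with rfl | rfl <;> rw [Matrix.mulVec_one_add_smul_single]
  · exact ⟨sMinus_update_add_mul_prev_le hp x hkl, sPlus_update_add_mul_prev_le hp x hkl⟩
  · exact sMinus_le_and_sPlus_le_of_update_add_mul_next hp x hkl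

/-- An elementary bidiagonal matrix `A = I + p E_{i,i-1}` or
`A = I + p E_{i-1,i}` with `p ≥ 0` satisfies `s^-(Ax) ≤ s^-(x)` and
`s^+(Ax) ≤ s^+(x)` for every `x ∈ ℝ^n`. Here `k, l` are the (0-indexed) indices
with `k = l + 1`, so `(k, l)` runs over the subdiagonal positions
`(i, i-1)`, `i ∈ {2,…,n}` (1-indexed). -/
theorem stmt0 {n : ℕ} (hn : 2 ≤ n) (p : ℝ) (hp : 0 ≤ p) (k l : Fin n)
    (hkl : (k : ℕ) = (l : ℕ) + 1)
    (A : Matrix (Fin n) (Fin n) ℝ)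
    (hA : A = 1 + p • Matrix.single k l 1 ∨
          A = 1 + p • Matrix.single l k 1)
    (x : Fin n → ℝ) :
    sMinus (A.mulVec x) ≤ sMinus x ∧ sPlus (A.mulVec x) ≤ sPlus x :=
  stmt0_general p hp k l hkl A hA x

end
end

section
/- Let A : (a,b) → ℝ^{n×n} be measurable and locally essentially bounded, and for a < t0 ≤ t < b let Θ(t,t0) denote the unique locally absolutely continuous solution at time t of (d/ds)Θ(s,t0) = A(s)Θ(s,t0) (for almost all s), Θ(t0,t0) = I. Then the following two conditions are equivalent: (1) Θ(t,t0) is entrywise nonnegative for all a < t0 ≤ t < b; (2) A(t) is a Metzler matrix for almost all t ∈ (a,b). -/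
open Matrix MeasureTheory Set Polynomial Filter

noncomputable section

/-!
Write `θ = Θ(·, t₀)`. A continuous induction on `u` shows that `A θ` is integrable on `[t₀, u]`,
so that `θ` is continuous and, by Grönwall's inequality, bounded.

(2 ⇒ 1) If `|A| ≤ c` on `[t₀, t]`, then `e^{c (u - t₀)} θ u` solves the same equation for `A + c I`,
which is entrywise nonnegative; Grönwall's inequality for the largest negative part of its entries
shows that this part vanishes.

(1 ⇒ 2) `θ (t₀ + r) = 1 + ∫_{t₀}^{t₀+r} A + O(r²)`, so at every point `t₀` where the primitive of
`A` has derivative `A t₀` (almost every point, by Lebesgue's differentiation theorem), an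
off-diagonal entry satisfies `r A t₀ i j + o(r) = θ (t₀ + r) i j ≥ 0`.
-/

open intervalIntegral Real Topology

theorem le_mul_exp_of_le_add_integral {q : ℝ → ℝ} {t0 t1 K δ : ℝ} (hK : 0 ≤ K)
    (hq : ContinuousOn q (Icc t0 t1)) (hle : ∀ s ∈ Icc t0 t1, q s ≤ δ + ∫ u in t0..s, K * q u) :
    ∀ s ∈ Icc t0 t1, q s ≤ δ * exp (K * (s - t0)) := by
  intro s hs
  have h01 : t0 ≤ t1 := hs.1.trans hs.2
  set G : ℝ → ℝ := fun x => δ + ∫ u in t0..x, K * q u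
  have hKq : ContinuousOn (fun u => K * q u) (Icc t0 t1) := continuousOn_const.mul hq
  have hG : ContinuousOn G (Icc t0 t1) := by
    have := continuousOn_primitive_interval (μ := volume) (uIcc_of_le h01 ▸ hKq.integrableOn_Icc)
    exact continuousOn_const.add (uIcc_of_le h01 ▸ this)
  have hG' : ∀ x ∈ Ico t0 t1, HasDerivWithinAt G (K * q x) (Ici x) x := by
    intro x hx
    have hmem : Icc t0 t1 ∈ 𝓝[>] x :=
      mem_of_superset (Ioo_mem_nhdsGT hx.2) fun y hy => ⟨hx.1.trans hy.1.le, hy.2.le⟩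
    refine (integral_hasDerivWithinAt_right ?_ ?_ ?_).const_add δ
    · exact (hKq.mono (Icc_subset_Icc le_rfl hx.2.le)).intervalIntegrable_of_Icc hx.1
    · exact ⟨Icc t0 t1, hmem, hKq.aestronglyMeasurable measurableSet_Icc⟩
    · exact (hKq x (Ico_subset_Icc_self hx)).mono_of_mem_nhdsWithin hmem
  have hbound : ∀ x ∈ Ico t0 t1, K * q x ≤ K * G x + 0 := fun x hx => by
    rw [add_zero]; exact mul_le_mul_of_nonneg_left (hle x (Ico_subset_Icc_self hx)) hK
  calc q s ≤ G s := hle s hs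
    _ ≤ gronwallBound δ K 0 (s - t0) :=
      le_gronwallBound_of_liminf_deriv_right_le hG
        (fun x hx _ hr => (hG' x hx).liminf_right_slope_le hr) (by simp [G]) hbound s hs
    _ = δ * exp (K * (s - t0)) := gronwallBound_ε0 δ K _

theorem continuous_induction_Icc {P : ℝ → Prop} {a b : ℝ} (hab : a ≤ b)
    (hle : ∀ x ∈ Icc a b, (∀ y ∈ Ico a x, P y) → P x)
    (hgt : ∀ x ∈ Ico a b, P x → ∀ᶠ y in 𝓝[>] x, P y) : P b := by
  set s := {x | ∀ y ∈ Ico a x, P y}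
  have hs : IsClosed s := by
    have hcompl : sᶜ = ⋃ y ∈ {y | a ≤ y ∧ ¬P y}, Ioi y := by
      ext x; simp only [s, mem_compl_iff, mem_ofPred_eq, mem_Ico, not_forall, mem_iUnion, mem_Ioi,
        exists_prop]; exact exists_congr fun y => by tauto
    rw [← isOpen_compl_iff, hcompl]
    exact isOpen_biUnion fun _ _ => isOpen_Ioi
  suffices Icc a b ⊆ s from hle b (right_mem_Icc.2 hab) (this (right_mem_Icc.2 hab))
  refine (hs.inter isClosed_Icc).Icc_subset_of_forall_mem_nhdsGT_of_Icc_subset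
    (fun y hy => absurd hy.2 hy.1.not_gt) fun t ht hts => ?_
  have hts' : t ∈ s := hts (right_mem_Icc.2 ht.1)
  have hPt : P t := hle t (Ico_subset_Icc_self ht) hts'
  obtain ⟨m, htm, hm⟩ := mem_nhdsGT_iff_exists_Ioo_subset.1 (hgt t ht hPt)
  filter_upwards [Ioo_mem_nhdsGT htm] with x hx y hy
  rcases lt_trichotomy y t with hyt | rfl | hyt
  · exact hts' y ⟨hy.1, hyt⟩
  · exact hPt
  · exact hm ⟨hyt, hy.2.trans hx.2⟩

theorem ae_mem_Ioo_of_forall_Icc {P : ℝ → Prop} {a b : ℝ}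
    (h : ∀ α γ, a < α → α ≤ γ → γ < b → ∀ᵐ x, x ∈ Icc α γ → P x) :
    ∀ᵐ x, x ∈ Ioo a b → P x := by
  rw [ae_iff]
  refine measure_null_of_locally_null _ fun x hx => ?_
  obtain ⟨hxI, -⟩ := Classical.not_imp.1 hx
  obtain ⟨α, haα, hαx⟩ := exists_between hxI.1
  obtain ⟨γ, hxγ, hγb⟩ := exists_between hxI.2
  refine ⟨_, inter_mem_nhdsWithin _ (Ioo_mem_nhds hαx hxγ),
    measure_mono_null ?_ (ae_iff.1 (h α γ haα (hαx.trans hxγ).le hγb))⟩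
  exact fun y hy hPy => hy.1 fun _ => hPy (Ioo_subset_Icc_self hy.2)

open scoped Matrix.Norms.Elementwise

theorem Matrix.abs_mul_apply_le {n : ℕ} {c : ℝ} {M N : Matrix (Fin n) (Fin n) ℝ}
    (hM : ∀ i k, |M i k| ≤ c) (i j : Fin n) : |(M * N) i j| ≤ n * c * ‖N‖ := by
  rw [Matrix.mul_apply]
  calc |∑ k, M i k * N k j| ≤ ∑ k, |M i k * N k j| := Finset.abs_sum_le_sum_abs _ _
    _ ≤ ∑ _k : Fin n, c * ‖N‖ := Finset.sum_le_sum fun k _ => by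
        rw [abs_mul]
        exact mul_le_mul (hM i k) (N.norm_entry_le_entrywise_sup_norm) (abs_nonneg _)
          ((abs_nonneg _).trans (hM i k))
    _ = n * c * ‖N‖ := by simp [mul_assoc]

theorem Matrix.neg_mul_apply_le {n : ℕ} {c : ℝ} {M N : Matrix (Fin n) (Fin n) ℝ}
    (hM : ∀ i k, 0 ≤ M i k ∧ M i k ≤ c) (i j : Fin n) :
    -(M * N) i j ≤ n * c * ‖Matrix.of fun k l => max (-N k l) 0‖ := by
  set N' := Matrix.of fun k l => max (-N k l) 0
  rw [Matrix.mul_apply, ← Finset.sum_neg_distrib]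
  calc ∑ k, -(M i k * N k j) ≤ ∑ _k : Fin n, c * ‖N'‖ := Finset.sum_le_sum fun k _ => ?_
    _ = n * c * ‖N'‖ := by simp [mul_assoc]
  have hN' : max (-N k j) 0 ≤ ‖N'‖ := by
    simpa [N', Real.norm_eq_abs, abs_of_nonneg] using
      N'.norm_entry_le_entrywise_sup_norm (i := k) (j := j)
  calc -(M i k * N k j) = M i k * -N k j := by ring
    _ ≤ M i k * max (-N k j) 0 := mul_le_mul_of_nonneg_left (le_max_left _ _) (hM i k).1
    _ ≤ c * ‖N'‖ := mul_le_mul (hM i k).2 hN' (le_max_right _ _) ((hM i k).1.trans (hM i k).2)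

section Transition

variable {n : ℕ} {A θ : ℝ → Matrix (Fin n) (Fin n) ℝ} {t0 t1 c : ℝ}

-- The interval integral is Lean's, equal to `0` when the integrand is not integrable; that
-- `A θ` is integrable is a consequence (`IsTransitionFrom.integrableOn`), not an assumption.
def IsTransitionFrom (A θ : ℝ → Matrix (Fin n) (Fin n) ℝ) (t0 t1 : ℝ) : Prop :=
  ∀ u ∈ Icc t0 t1, ∀ i j,
    θ u i j = (1 : Matrix (Fin n) (Fin n) ℝ) i j + ∫ s in t0..u, (A s * θ s) i j

theorem intervalIntegrable_apply_of_bound (hAm : ∀ i j, Measurable fun u => A u i j)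
    (hAc : ∀ᵐ u, u ∈ Icc t0 t1 → ∀ i j, |A u i j| ≤ c) (h01 : t0 ≤ t1) (i j : Fin n) :
    IntervalIntegrable (fun u => A u i j) volume t0 t1 := by
  refine (intervalIntegrable_iff_integrableOn_Ioc_of_le h01).2
    (Measure.integrableOn_of_bounded (M := c) measure_Ioc_lt_top.ne
      (hAm i j).aestronglyMeasurable ?_)
  filter_upwards [ae_restrict_of_ae hAc, ae_restrict_mem measurableSet_Ioc] with v hv hvI
  exact hv (Ioc_subset_Icc_self hvI) i j

theorem integrableOn_mul_apply {B : ℝ → Matrix (Fin n) (Fin n) ℝ} {S : Set ℝ}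
    (hA : ∀ i k, AEStronglyMeasurable (fun u => A u i k) (volume.restrict S))
    (hAc : ∀ᵐ u ∂volume.restrict S, ∀ i k, |A u i k| ≤ c)
    (hB : ∀ k j, IntegrableOn (fun u => B u k j) S) (i j : Fin n) :
    IntegrableOn (fun u => (A u * B u) i j) S := by
  simp only [Matrix.mul_apply]
  exact integrable_finsetSum _ fun k _ => (hB k j).bdd_mul (hA i k) (hAc.mono fun u hu => hu i k)

theorem abs_integral_mul_apply_le {B : ℝ → Matrix (Fin n) (Fin n) ℝ} {g : ℝ → ℝ} {u : ℝ}
    (hu : u ∈ Icc t0 t1) (hc : 0 ≤ c) (hAc : ∀ᵐ v, v ∈ Icc t0 t1 → ∀ i k, |A v i k| ≤ c)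
    (hBg : ∀ v ∈ Icc t0 u, ‖B v‖ ≤ g v) (hg : IntervalIntegrable g volume t0 u) (i j : Fin n) :
    |∫ v in t0..u, (A v * B v) i j| ≤ ∫ v in t0..u, n * c * g v := by
  rw [← Real.norm_eq_abs]
  refine norm_integral_le_of_norm_le hu.1 ?_ (hg.const_mul _)
  filter_upwards [hAc] with v hv hvu
  exact (abs_mul_apply_le (hv ⟨hvu.1.le, hvu.2.trans hu.2⟩) i j).trans
    (mul_le_mul_of_nonneg_left (hBg v (Ioc_subset_Icc_self hvu)) (by positivity))

theorem IsTransitionFrom.continuousOn_apply (h : IsTransitionFrom A θ t0 t1) {s : ℝ}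
    (hs : s ∈ Icc t0 t1) {i j : Fin n} (hint : IntegrableOn (fun u => (A u * θ u) i j) (Ioc t0 s)) :
    ContinuousOn (fun u => θ u i j) (Icc t0 s) := by
  have hprim := continuousOn_primitive_interval' (μ := volume)
    ((intervalIntegrable_iff_integrableOn_Ioc_of_le hs.1).2 hint) left_mem_uIcc
  rw [uIcc_of_le hs.1] at hprim
  exact (continuousOn_const.add hprim).congr fun u hu => h u ⟨hu.1, hu.2.trans hs.2⟩ i j

theorem IsTransitionFrom.continuousOn (h : IsTransitionFrom A θ t0 t1) {s : ℝ}
    (hs : s ∈ Icc t0 t1) (hint : ∀ i j, IntegrableOn (fun u => (A u * θ u) i j) (Ioc t0 s)) :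
    ContinuousOn θ (Icc t0 s) :=
  continuousOn_pi.2 fun i => continuousOn_pi.2 fun j => h.continuousOn_apply hs (hint i j)

theorem IsTransitionFrom.norm_le_exp (h : IsTransitionFrom A θ t0 t1) (hc : 0 ≤ c)
    (hAc : ∀ᵐ u, u ∈ Icc t0 t1 → ∀ i j, |A u i j| ≤ c) {s : ℝ} (hs : s ∈ Icc t0 t1)
    (hint : ∀ i j, IntegrableOn (fun u => (A u * θ u) i j) (Ioc t0 s)) :
    ∀ u ∈ Icc t0 s, ‖θ u‖ ≤ exp (n * c * (u - t0)) := by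
  have hcont := (h.continuousOn hs hint).norm
  have key : ∀ u ∈ Icc t0 s, ‖θ u‖ ≤ 1 + ∫ v in t0..u, n * c * ‖θ v‖ := by
    intro u hu
    have hu' : u ∈ Icc t0 t1 := ⟨hu.1, hu.2.trans hs.2⟩
    have hI : 0 ≤ ∫ v in t0..u, n * c * ‖θ v‖ := integral_nonneg hu.1 fun v _ => by positivity
    refine (Matrix.norm_le_iff (by positivity)).2 fun i j => ?_
    rw [h u hu' i j, Real.norm_eq_abs]
    refine (abs_add_le _ _).trans (add_le_add ?_ ?_)
    · rw [Matrix.one_apply]; split_ifs <;> simp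
    · exact abs_integral_mul_apply_le hu' hc hAc (fun v _ => le_rfl)
        ((hcont.mono (Icc_subset_Icc_right hu.2)).intervalIntegrable_of_Icc hu.1) i j
  simpa using le_mul_exp_of_le_add_integral (by positivity) hcont key

theorem IsTransitionFrom.integrableOn_of_forall_lt (h : IsTransitionFrom A θ t0 t1)
    (hAm : ∀ i j, Measurable fun u => A u i j) (hc : 0 ≤ c)
    (hAc : ∀ᵐ u, u ∈ Icc t0 t1 → ∀ i j, |A u i j| ≤ c) {T : ℝ} (hT : T ∈ Icc t0 t1)
    (hlt : ∀ s ∈ Ico t0 T, ∀ i j, IntegrableOn (fun u => (A u * θ u) i j) (Ioc t0 s)) :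
    ∀ i j, IntegrableOn (fun u => (A u * θ u) i j) (Ioc t0 T) := by
  have hsub : ∀ s ∈ Ico t0 T, s ∈ Icc t0 t1 := fun s hs => ⟨hs.1, hs.2.le.trans hT.2⟩
  have hcont : ContinuousOn θ (Ioo t0 T) := fun u hu => by
    obtain ⟨s, hus, hsT⟩ := exists_between hu.2
    have hs : s ∈ Ico t0 T := ⟨hu.1.le.trans hus.le, hsT⟩
    exact ((h.continuousOn (hsub s hs) (hlt s hs)).continuousAt
      (Icc_mem_nhds hu.1 hus)).continuousWithinAt
  have hbound : ∀ u ∈ Ioo t0 T, ‖θ u‖ ≤ exp (n * c * (T - t0)) := fun u hu => by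
    have hu' : u ∈ Ico t0 T := ⟨hu.1.le, hu.2⟩
    refine (h.norm_le_exp hc hAc (hsub u hu') (hlt u hu') u ⟨hu.1.le, le_rfl⟩).trans ?_
    gcongr; exact hu.2.le
  intro i j
  rw [integrableOn_Ioc_iff_integrableOn_Ioo]
  refine integrableOn_mul_apply (c := c) (fun i k => (hAm i k).aestronglyMeasurable) ?_
    (fun k l => ?_) i j
  · filter_upwards [ae_restrict_of_ae hAc, ae_restrict_mem measurableSet_Ioo] with u hu hmem
    exact hu ⟨hmem.1.le, hmem.2.le.trans hT.2⟩
  · refine Integrable.of_bound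
      ((continuousOn_pi.1 (continuousOn_pi.1 hcont k) l).aestronglyMeasurable measurableSet_Ioo)
      (exp (n * c * (T - t0))) ?_
    filter_upwards [ae_restrict_mem measurableSet_Ioo] with u hu
    exact (θ u).norm_entry_le_entrywise_sup_norm.trans (hbound u hu)

theorem IsTransitionFrom.eventually_integrableOn_apply (h : IsTransitionFrom A θ t0 t1) {T : ℝ}
    (hT : T ∈ Ico t0 t1) {i j : Fin n}
    (hint : IntegrableOn (fun u => (A u * θ u) i j) (Ioc t0 T)) :
    ∀ᶠ s in 𝓝[>] T, IntegrableOn (fun u => θ u i j) (Ioc t0 s) := by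
  by_cases hext : ∃ s ∈ Ioc T t1, IntegrableOn (fun u => (A u * θ u) i j) (Ioc t0 s)
  · obtain ⟨s, hs, hints⟩ := hext
    filter_upwards [Ioc_mem_nhdsGT hs.1] with s' hs'
    have hs'' : s' ∈ Icc t0 t1 := ⟨hT.1.trans hs'.1.le, hs'.2.trans hs.2⟩
    exact (h.continuousOn_apply hs'' (hints.mono_set (Ioc_subset_Ioc_right hs'.2))
      ).integrableOn_Icc.mono_set Ioc_subset_Icc_self
  · push Not at hext
    filter_upwards [Ioc_mem_nhdsGT hT.2] with s hs
    rw [← Ioc_union_Ioc_eq_Ioc hT.1 hs.1.le]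
    refine ((h.continuousOn_apply ⟨hT.1, hT.2.le⟩ hint).integrableOn_Icc.mono_set
      Ioc_subset_Icc_self).union ?_
    -- past `T` the integral is the junk value `0`, so `θ` is constant there
    refine (integrableOn_const (C := (1 : Matrix (Fin n) (Fin n) ℝ) i j)
      measure_Ioc_lt_top.ne).congr_fun (fun u hu => ?_) measurableSet_Ioc
    have hu' : u ∈ Ioc T t1 := ⟨hu.1, hu.2.trans hs.2⟩
    rw [h u ⟨hT.1.trans hu.1.le, hu'.2⟩ i j, intervalIntegral.integral_undef, add_zero]
    rw [intervalIntegrable_iff_integrableOn_Ioc_of_le (hT.1.trans hu.1.le)]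
    exact hext u hu'

theorem IsTransitionFrom.eventually_integrableOn (h : IsTransitionFrom A θ t0 t1)
    (hAm : ∀ i j, Measurable fun u => A u i j)
    (hAc : ∀ᵐ u, u ∈ Icc t0 t1 → ∀ i j, |A u i j| ≤ c) {T : ℝ} (hT : T ∈ Ico t0 t1)
    (hint : ∀ i j, IntegrableOn (fun u => (A u * θ u) i j) (Ioc t0 T)) :
    ∀ᶠ s in 𝓝[>] T, ∀ i j, IntegrableOn (fun u => (A u * θ u) i j) (Ioc t0 s) := by
  have hθ : ∀ᶠ s in 𝓝[>] T, ∀ k l, IntegrableOn (fun u => θ u k l) (Ioc t0 s) :=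
    eventually_all.2 fun k => eventually_all.2 fun l =>
      h.eventually_integrableOn_apply hT (hint k l)
  filter_upwards [hθ, Ioc_mem_nhdsGT hT.2] with s hθs hs
  refine integrableOn_mul_apply (c := c) (fun i k => (hAm i k).aestronglyMeasurable) ?_ hθs
  filter_upwards [ae_restrict_of_ae hAc, ae_restrict_mem measurableSet_Ioc] with u hu hmem
  exact hu ⟨hmem.1.le, hmem.2.trans hs.2⟩

theorem IsTransitionFrom.integrableOn (h : IsTransitionFrom A θ t0 t1)
    (hAm : ∀ i j, Measurable fun u => A u i j) (hc : 0 ≤ c)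
    (hAc : ∀ᵐ u, u ∈ Icc t0 t1 → ∀ i j, |A u i j| ≤ c) (h01 : t0 ≤ t1) :
    ∀ i j, IntegrableOn (fun u => (A u * θ u) i j) (Ioc t0 t1) :=
  continuous_induction_Icc h01 (fun _ hT hlt => h.integrableOn_of_forall_lt hAm hc hAc hT hlt)
    fun _ hT hint => h.eventually_integrableOn hAm hAc hT hint

theorem IsTransitionFrom.exp_smul (h : IsTransitionFrom A θ t0 t1)
    (hint : ∀ i j, IntegrableOn (fun u => (A u * θ u) i j) (Ioc t0 t1)) (μ : ℝ) :
    IsTransitionFrom (fun u => A u + μ • 1) (fun u => exp (μ * (u - t0)) • θ u) t0 t1 := by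
  intro u hu i j
  set e : ℝ → ℝ := fun v => exp (μ * (v - t0))
  set F : ℝ → ℝ := fun v => (1 : Matrix (Fin n) (Fin n) ℝ) i j + ∫ s in t0..v, (A s * θ s) i j
  have hfint : IntervalIntegrable (fun s => (A s * θ s) i j) volume t0 u :=
    (intervalIntegrable_iff_integrableOn_Ioc_of_le hu.1).2
      ((hint i j).mono_set (Ioc_subset_Ioc_right hu.2))
  have he' : ∀ v, deriv e v = μ * e v := fun v => by
    simpa [e, mul_comm] using (((hasDerivAt_id v).sub_const t0).const_mul μ).exp.deriv
  have hF' : ∀ᵐ v, v ∈ uIcc t0 u → deriv F v = (A v * θ v) i j := by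
    filter_upwards [hfint.ae_hasDerivAt_integral] with v hv hvI
    exact ((hv hvI t0 left_mem_uIcc).const_add _).deriv
  have hF : AbsolutelyContinuousOnInterval F t0 u :=
    contDiffOn_const.absolutelyContinuousOnInterval.add
      (hfint.absolutelyContinuousOnInterval_intervalIntegral left_mem_uIcc)
  have hibp : ∫ v in t0..u, deriv e v * F v + e v * deriv F v = e u * F u - e t0 * F t0 :=
    AbsolutelyContinuousOnInterval.integral_deriv_mul_eq_sub
      (ContDiffOn.absolutelyContinuousOnInterval (by fun_prop)) hF
  have hcongr : ∫ s in t0..u, ((A s + μ • 1) * (e s • θ s)) i j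
      = ∫ v in t0..u, deriv e v * F v + e v * deriv F v := by
    refine integral_congr_ae ?_
    filter_upwards [hF'] with v hv hvI
    rw [uIoc_of_le hu.1] at hvI
    have hFv : F v = θ v i j := (h v ⟨hvI.1.le, hvI.2.trans hu.2⟩ i j).symm
    rw [he', hv (uIcc_of_le hu.1 ▸ Ioc_subset_Icc_self hvI), hFv]
    simp only [Matrix.add_mul, Matrix.mul_smul, Matrix.smul_mul, one_mul, Matrix.add_apply,
      Matrix.smul_apply, smul_eq_mul]
    ring
  have hFu : F u = θ u i j := (h u hu i j).symm
  show e u * θ u i j = _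
  rw [hcongr, hibp, hFu]
  simp [e, F]

theorem IsTransitionFrom.neg_apply_le_integral (h : IsTransitionFrom A θ t0 t1)
    (hA : ∀ᵐ u, u ∈ Icc t0 t1 → ∀ i j, 0 ≤ A u i j ∧ A u i j ≤ c) {u : ℝ} (hu : u ∈ Icc t0 t1)
    {i j : Fin n} (hint : IntegrableOn (fun v => (A v * θ v) i j) (Ioc t0 u))
    (hN : IntervalIntegrable (fun v => n * c * ‖Matrix.of fun k l => max (-θ v k l) 0‖)
      volume t0 u) :
    -θ u i j ≤ ∫ v in t0..u, n * c * ‖Matrix.of fun k l => max (-θ v k l) 0‖ := by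
  have hmono : ∫ v in t0..u, -(A v * θ v) i j
      ≤ ∫ v in t0..u, n * c * ‖Matrix.of fun k l => max (-θ v k l) 0‖ :=
    integral_mono_ae_restrict hu.1 ((intervalIntegrable_iff_integrableOn_Ioc_of_le hu.1).2 hint).neg
      hN ?_
  · rw [intervalIntegral.integral_neg] at hmono
    rw [h u hu i j, Matrix.one_apply]
    split_ifs <;> linarith
  filter_upwards [ae_restrict_of_ae hA, ae_restrict_mem measurableSet_Icc] with v hv hvI
  exact neg_mul_apply_le (hv ⟨hvI.1, hvI.2.trans hu.2⟩) i j

theorem IsTransitionFrom.nonneg (h : IsTransitionFrom A θ t0 t1)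
    (hAm : ∀ i j, Measurable fun u => A u i j) (hc : 0 ≤ c)
    (hA : ∀ᵐ u, u ∈ Icc t0 t1 → ∀ i j, 0 ≤ A u i j ∧ A u i j ≤ c) :
    ∀ u ∈ Icc t0 t1, ∀ i j, 0 ≤ θ u i j := by
  intro s hs
  have hAc : ∀ᵐ u, u ∈ Icc t0 t1 → ∀ i j, |A u i j| ≤ c := hA.mono fun u hu hmem i j =>
    abs_le.2 ⟨by linarith [(hu hmem i j).1], (hu hmem i j).2⟩
  have hint := h.integrableOn hAm hc hAc (hs.1.trans hs.2)
  set N : ℝ → Matrix (Fin n) (Fin n) ℝ := fun u => Matrix.of fun i j => max (-θ u i j) 0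
  have hθ := h.continuousOn (right_mem_Icc.2 (hs.1.trans hs.2)) hint
  have hN : ContinuousOn (fun u => ‖N u‖) (Icc t0 t1) :=
    (continuousOn_pi.2 fun i => continuousOn_pi.2 fun j =>
      (ContinuousOn.sup (continuousOn_pi.1 (continuousOn_pi.1 hθ i) j).neg continuousOn_const)).norm
  have key : ∀ u ∈ Icc t0 t1, ‖N u‖ ≤ 0 + ∫ v in t0..u, n * c * ‖N v‖ := by
    intro u hu
    have hNint : IntervalIntegrable (fun v => n * c * ‖N v‖) volume t0 u :=
      ((continuousOn_const.mul hN).mono (Icc_subset_Icc_right hu.2)).intervalIntegrable_of_Icc hu.1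
    have hI : 0 ≤ ∫ v in t0..u, n * c * ‖N v‖ := integral_nonneg hu.1 fun v _ => by positivity
    rw [zero_add]
    refine (Matrix.norm_le_iff hI).2 fun i j => ?_
    show ‖max (-θ u i j) 0‖ ≤ _
    rw [Real.norm_eq_abs, abs_of_nonneg (le_max_right _ _)]
    exact max_le (h.neg_apply_le_integral hA hu
      ((hint i j).mono_set (Ioc_subset_Ioc_right hu.2)) hNint) hI
  have hNs := le_mul_exp_of_le_add_integral (by positivity) hN key s hs
  intro i j
  have hentry := (N s).norm_entry_le_entrywise_sup_norm (i := i) (j := j)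
  simp only [zero_mul, N, Matrix.of_apply, Real.norm_eq_abs] at hNs hentry
  linarith [le_abs_self (max (-θ s i j) 0), le_max_left (-θ s i j) 0]

theorem IsTransitionFrom.nonneg_of_metzler (h : IsTransitionFrom A θ t0 t1)
    (hAm : ∀ i j, Measurable fun u => A u i j) (hc : 0 ≤ c)
    (hAc : ∀ᵐ u, u ∈ Icc t0 t1 → ∀ i j, |A u i j| ≤ c)
    (hM : ∀ᵐ u, u ∈ Icc t0 t1 → ∀ i j, i ≠ j → 0 ≤ A u i j) :
    ∀ u ∈ Icc t0 t1, ∀ i j, 0 ≤ θ u i j := by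
  intro u hu i j
  have hshift := h.exp_smul (h.integrableOn hAm hc hAc (hu.1.trans hu.2)) c
  have hB : ∀ᵐ v, v ∈ Icc t0 t1 → ∀ i j, 0 ≤ (A v + c • 1) i j ∧ (A v + c • 1) i j ≤ 2 * c := by
    filter_upwards [hAc, hM] with v hv hv' hvI k l
    have hkl := abs_le.1 (hv hvI k l)
    rcases eq_or_ne k l with rfl | hkl'
    · simp only [Matrix.add_apply, Matrix.smul_apply, Matrix.one_apply_eq, smul_eq_mul]
      constructor <;> linarith
    · simp only [Matrix.add_apply, Matrix.smul_apply, Matrix.one_apply_ne hkl', smul_eq_mul]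
      constructor <;> linarith [hv' hvI k l hkl']
  have hBm : ∀ i j, Measurable fun v => (A v + c • 1) i j := fun k l => by
    simpa only [Matrix.add_apply] using (hAm k l).add_const _
  have := hshift.nonneg hBm (by positivity) hB u hu i j
  simp only [Matrix.smul_apply, smul_eq_mul] at this
  exact nonneg_of_mul_nonneg_right this (exp_pos _)

theorem IsTransitionFrom.abs_sub_integral_le (h : IsTransitionFrom A θ t0 t1)
    (hAm : ∀ i j, Measurable fun u => A u i j) (hc : 0 ≤ c)
    (hAc : ∀ᵐ u, u ∈ Icc t0 t1 → ∀ i j, |A u i j| ≤ c) {u : ℝ} (hu : u ∈ Icc t0 t1)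
    (i j : Fin n) :
    |θ u i j - (1 : Matrix (Fin n) (Fin n) ℝ) i j - ∫ v in t0..u, A v i j|
      ≤ (n * c) ^ 2 * exp (n * c * (t1 - t0)) * (u - t0) ^ 2 := by
  set M := exp (n * c * (t1 - t0))
  have h01 := hu.1.trans hu.2
  have hint := h.integrableOn hAm hc hAc h01
  have hθM : ∀ v ∈ Icc t0 t1, ‖θ v‖ ≤ M := fun v hv =>
    (h.norm_le_exp hc hAc (right_mem_Icc.2 h01) hint v hv).trans
      (exp_le_exp.2 (mul_le_mul_of_nonneg_left (by linarith [hv.2]) (by positivity)))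
  have hθ1 : ∀ v ∈ Icc t0 u, ‖θ v - 1‖ ≤ n * c * M * (u - t0) := by
    intro v hv
    have hv' : v ∈ Icc t0 t1 := ⟨hv.1, hv.2.trans hu.2⟩
    refine (Matrix.norm_le_iff (by have := hu.1; positivity)).2 fun k l => ?_
    rw [Matrix.sub_apply, h v hv' k l, add_sub_cancel_left, Real.norm_eq_abs]
    calc _ ≤ ∫ _ in t0..v, n * c * M :=
          abs_integral_mul_apply_le hv' hc hAc (fun w hw => hθM w ⟨hw.1, hw.2.trans hv'.2⟩)
            intervalIntegrable_const k l
      _ = n * c * M * (v - t0) := by rw [intervalIntegral.integral_const, smul_eq_mul, mul_comm]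
      _ ≤ n * c * M * (u - t0) := by gcongr; exact hv.2
  have hfint : IntervalIntegrable (fun v => (A v * θ v) i j) volume t0 u :=
    (intervalIntegrable_iff_integrableOn_Ioc_of_le hu.1).2
      ((hint i j).mono_set (Ioc_subset_Ioc_right hu.2))
  have hAint : IntervalIntegrable (fun v => A v i j) volume t0 u :=
    (intervalIntegrable_apply_of_bound hAm hAc h01 i j).mono_set
      (uIcc_subset_uIcc left_mem_uIcc (uIcc_of_le h01 ▸ hu))
  rw [h u hu i j, add_sub_cancel_left, ← integral_sub hfint hAint]
  calc |∫ v in t0..u, ((A v * θ v) i j - A v i j)| = |∫ v in t0..u, (A v * (θ v - 1)) i j| := by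
        simp [Matrix.mul_sub]
    _ ≤ ∫ _ in t0..u, n * c * (n * c * M * (u - t0)) :=
        abs_integral_mul_apply_le hu hc hAc hθ1 intervalIntegrable_const i j
    _ = (n * c) ^ 2 * M * (u - t0) ^ 2 := by rw [intervalIntegral.integral_const, smul_eq_mul]; ring

theorem IsTransitionFrom.coeff_nonneg_of_hasDerivAt (h : IsTransitionFrom A θ t0 t1)
    (hAm : ∀ i j, Measurable fun u => A u i j) (hc : 0 ≤ c)
    (hAc : ∀ᵐ u, u ∈ Icc t0 t1 → ∀ i j, |A u i j| ≤ c) (h01 : t0 < t1) {i j : Fin n}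
    (hij : i ≠ j) (hθ : ∀ u ∈ Ioc t0 t1, 0 ≤ θ u i j)
    (hderiv : HasDerivAt (fun u => ∫ v in t0..u, A v i j) (A t0 i j) t0) : 0 ≤ A t0 i j := by
  set L := (n * c) ^ 2 * exp (n * c * (t1 - t0))
  have hslope := hderiv.tendsto_slope.mono_left (nhdsGT_le_nhdsNE t0)
  have hlow : ∀ᶠ u in 𝓝[>] t0, -(L * (u - t0)) ≤ slope (fun u => ∫ v in t0..u, A v i j) t0 u := by
    filter_upwards [Ioc_mem_nhdsGT h01] with u hu
    have hut : 0 < u - t0 := sub_pos.2 hu.1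
    have hest := (abs_le.1 (h.abs_sub_integral_le hAm hc hAc ⟨hu.1.le, hu.2⟩ i j)).2
    rw [Matrix.one_apply_ne hij] at hest
    rw [slope_def_field, integral_same, sub_zero, le_div_iff₀ hut]
    nlinarith [hθ u hu]
  have hlim : Tendsto (fun u => -(L * (u - t0))) (𝓝[>] t0) (𝓝 0) := by
    have : Tendsto (fun u => -(L * (u - t0))) (𝓝 t0) (𝓝 (-(L * (t0 - t0)))) :=
      (Continuous.tendsto (by fun_prop) t0)
    simpa using this.mono_left nhdsWithin_le_nhds
  exact le_of_tendsto_of_tendsto hlim hslope hlow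

end Transition

theorem IsTransitionOn.isTransitionFrom {n : ℕ} {a b t0 t1 : ℝ}
    {A : ℝ → Matrix (Fin n) (Fin n) ℝ} {Θ : ℝ → ℝ → Matrix (Fin n) (Fin n) ℝ}
    (h : IsTransitionOn a b A Θ) (ha : a < t0) (hb : t1 < b) :
    IsTransitionFrom A (fun u => Θ u t0) t0 t1 := fun u hu =>
  h t0 ⟨ha, hu.1.trans_lt (hu.2.trans_lt hb)⟩ u ⟨ha.trans_le hu.1, hu.2.trans_lt hb⟩

theorem GoodCoeff.exists_bound {n : ℕ} {a b t0 t1 : ℝ} {A : ℝ → Matrix (Fin n) (Fin n) ℝ}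
    (h : GoodCoeff a b A) (ha : a < t0) (hb : t1 < b) :
    ∃ c, 0 ≤ c ∧ ∀ᵐ u, u ∈ Icc t0 t1 → ∀ i j, |A u i j| ≤ c := by
  obtain ⟨C, hC⟩ := h.2 (Icc t0 t1) (fun u hu => ⟨ha.trans_le hu.1, hu.2.trans_lt hb⟩)
    isCompact_Icc
  exact ⟨max C 0, le_max_right _ _,
    hC.mono fun u hu hmem i j => (hu hmem i j).trans (le_max_left _ _)⟩

theorem IsTransitionOn.ae_metzler_Icc {n : ℕ} {a b α γ : ℝ} {A : ℝ → Matrix (Fin n) (Fin n) ℝ}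
    {Θ : ℝ → ℝ → Matrix (Fin n) (Fin n) ℝ} (h : IsTransitionOn a b A Θ) (hreg : GoodCoeff a b A)
    (hpos : ∀ t0 t, a < t0 → t0 ≤ t → t < b → ∀ i j, 0 ≤ Θ t t0 i j)
    (hα : a < α) (hαγ : α ≤ γ) (hγ : γ < b) :
    ∀ᵐ x, x ∈ Icc α γ → ∀ i j, i ≠ j → 0 ≤ A x i j := by
  obtain ⟨c, hc, hAc⟩ := hreg.exists_bound hα hγ
  have hleb := ae_all_iff.2 fun i => ae_all_iff.2 fun j =>
    (intervalIntegrable_apply_of_bound hreg.1 hAc hαγ i j).ae_hasDerivAt_integral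
  filter_upwards [hleb, measure_eq_zero_iff_ae_notMem.1 (measure_singleton γ)] with x hx hxγ hxI
    i j hij
  have hxI' : x ∈ uIcc α γ := by rwa [uIcc_of_le hαγ]
  have hxγ' : x < γ := lt_of_le_of_ne hxI.2 hxγ
  refine (h.isTransitionFrom (hα.trans_le hxI.1) hγ).coeff_nonneg_of_hasDerivAt hreg.1 hc ?_
    hxγ' hij (fun u hu => hpos x u (hα.trans_le hxI.1) hu.1.le (hu.2.trans_lt hγ) i j)
    (hx i j hxI' x hxI')
  filter_upwards [hAc] with u hu hmem
  exact hu ⟨hxI.1.trans hmem.1, hmem.2⟩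

/-- For a measurable locally essentially bounded `A` on `(a,b)` with
transition matrix `Θ`, the matrix `Θ(t,t0)` is entrywise nonnegative for all
`a < t0 ≤ t < b` iff `A(t)` is Metzler for almost all `t ∈ (a,b)`. -/
theorem stmt9 {n : ℕ} (a b : ℝ) (A : ℝ → Matrix (Fin n) (Fin n) ℝ)
    (Θ : ℝ → ℝ → Matrix (Fin n) (Fin n) ℝ)
    (hreg : GoodCoeff a b A) (htrans : IsTransitionOn a b A Θ) :
    (∀ t0 t : ℝ, a < t0 → t0 ≤ t → t < b → ∀ i j, 0 ≤ Θ t t0 i j) ↔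
    (∀ᵐ t ∂volume, t ∈ Set.Ioo a b → ∀ i j : Fin n, i ≠ j → 0 ≤ A t i j) := by
  constructor
  · intro hpos
    exact ae_mem_Ioo_of_forall_Icc fun α γ hα hαγ hγ =>
      htrans.ae_metzler_Icc hreg hpos hα hαγ hγ
  · intro hM t0 t ht0 h0t htb
    obtain ⟨c, hc, hAc⟩ := hreg.exists_bound ht0 htb
    refine (htrans.isTransitionFrom ht0 htb).nonneg_of_metzler hreg.1 hc hAc ?_ t ⟨h0t, le_rfl⟩
    filter_upwards [hM] with u hu hmem
    exact hu ⟨ht0.trans_le hmem.1, hmem.2.trans_lt htb⟩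
end
end

section
/- Let n ≥ 2 and let A ∈ ℝ^{n×n} be a matrix in M^+, i.e. tridiagonal with positive entries on the sub- and super-diagonal. Then for every p ∈ {1,…,n} the p-th additive compound matrix A^{[p]} is Metzler and irreducible. -/
open Matrix MeasureTheory Set Polynomial Filter

noncomputable section

/-- The `p`-th multiplicative compound of `A`: the matrix of all `p × p` minors of `A`,
indexed by the strictly increasing selections of `p` rows/columns. -/
def mulCompound {n : ℕ} (p : ℕ) (A : Matrix (Fin n) (Fin n) ℝ) :
    Matrix {s : Fin p → Fin n // StrictMono s} {s : Fin p → Fin n // StrictMono s} ℝ :=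
  Matrix.of fun α β => (A.submatrix α.1 β.1).det

/-- The `p`-th additive compound of `A`: `A^{[p]} = (d/dh) (I + hA)^{(p)} |_{h=0}`. -/
def addCompound {n : ℕ} (p : ℕ) (A : Matrix (Fin n) (Fin n) ℝ) :
    Matrix {s : Fin p → Fin n // StrictMono s} {s : Fin p → Fin n // StrictMono s} ℝ :=
  Matrix.of fun α β => deriv (fun h : ℝ => mulCompound p (1 + h • A) α β) 0

/-! Differentiating `det ((I + hA)[α, β])` at `h = 0` through the Leibniz expansion writes
`A^{[p]}_{αβ}` as a signed sum of terms `A_{α(σ j), β j} · ∏_{i ≠ j} δ_{α(σ i), β i}`.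
A nonzero term needs `α ∘ σ` to agree with `β` off `j` and, `A` being tridiagonal, to be
within one of it at `j`; then `α ∘ σ` is increasing, so `σ = 1` and the term is an
off-diagonal entry of `A`, hence nonnegative. When `α` and `β` differ in one position by one,
the term `σ = 1` is a positive entry of `A`. Any two increasing tuples are joined by a chain
of such moves, each decreasing the `ℓ¹` distance, which gives irreducibility. -/

theorem Matrix.hasDerivAt_det_add_smul {𝕜 ι : Type*} [NontriviallyNormedField 𝕜] [Fintype ι]
    [DecidableEq ι] (M C : Matrix ι ι 𝕜) :
    HasDerivAt (fun h : 𝕜 => (M + h • C).det)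
      (∑ σ : Equiv.Perm ι, ((Equiv.Perm.sign σ : ℤ) : 𝕜) *
        ∑ j, (∏ i ∈ Finset.univ.erase j, M (σ i) i) * C (σ j) j) 0 := by
  simp_rw [Matrix.det_apply', Matrix.add_apply, Matrix.smul_apply, smul_eq_mul]
  refine HasDerivAt.fun_sum fun σ _ => HasDerivAt.const_mul _ ?_
  refine (HasDerivAt.fun_finsetProd (u := Finset.univ) (x := (0 : 𝕜))
    fun i _ => (hasDerivAt_mul_const (C (σ i) i)).const_add (M (σ i) i)).congr_deriv ?_
  simp [smul_eq_mul]

theorem InMPlus.inM {n : ℕ} {A : Matrix (Fin n) (Fin n) ℝ} (hA : InMPlus A) : InM A :=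
  ⟨hA.1, fun i j h => (hA.2 i j h).le⟩

theorem InM.nonneg_of_ne {n : ℕ} {A : Matrix (Fin n) (Fin n) ℝ} (hA : InM A) {i j : Fin n}
    (hij : i ≠ j) : 0 ≤ A i j := by
  have hij : (i : ℕ) ≠ j := Fin.val_ne_of_ne hij
  by_cases hfar : (i : ℕ) + 1 < j ∨ (j : ℕ) + 1 < i
  · exact (hA.1 i j hfar).ge
  · exact hA.2 i j (by omega)

theorem Equiv.Perm.eq_one_of_strictMono_comp_near {n p : ℕ} {α β : Fin p → Fin n}
    (hα : StrictMono α) (hβ : StrictMono β) {σ : Equiv.Perm (Fin p)} {j : Fin p}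
    (hoff : ∀ i ≠ j, α (σ i) = β i) (hle : (α (σ j) : ℕ) ≤ β j + 1)
    (hge : (β j : ℕ) ≤ α (σ j) + 1) : σ = 1 := by
  have hne : ∀ i ≠ j, (α (σ i) : ℕ) ≠ α (σ j) := fun i hi h =>
    hi (σ.injective (hα.injective (Fin.val_injective h)))
  have hσ : StrictMono σ := by
    intro x y hxy
    refine hα.lt_iff_lt.mp (Fin.lt_def.mpr ?_)
    have hβxy : (β x : ℕ) < β y := hβ hxy
    rcases eq_or_ne x j with hx | hx <;> rcases eq_or_ne y j with hy | hy
    · exact absurd (hx ▸ hy ▸ hxy) (lt_irrefl _)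
    · subst hx
      have := congrArg Fin.val (hoff y hy); have := hne y hy; omega
    · subst hy
      have := congrArg Fin.val (hoff x hx); have := hne x hx; omega
    · rw [hoff x hx, hoff y hy]; exact hβxy
  exact Equiv.ext fun i => hσ.apply_eq

abbrev IncTuple (p n : ℕ) : Type := {s : Fin p → Fin n // StrictMono s}

theorem addCompound_apply {n p : ℕ} (A : Matrix (Fin n) (Fin n) ℝ) (α β : IncTuple p n) :
    addCompound p A α β = ∑ σ : Equiv.Perm (Fin p), ∑ j, ((Equiv.Perm.sign σ : ℤ) : ℝ) *
      ((∏ i ∈ Finset.univ.erase j, (1 : Matrix (Fin n) (Fin n) ℝ) (α.1 (σ i)) (β.1 i)) *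
        A (α.1 (σ j)) (β.1 j)) := by
  have hsub : (fun h : ℝ => mulCompound p (1 + h • A) α β) =
      fun h =>
        ((1 : Matrix (Fin n) (Fin n) ℝ).submatrix α.1 β.1 + h • A.submatrix α.1 β.1).det := by
    funext h
    simp [mulCompound, submatrix_add, submatrix_smul]
  rw [addCompound, of_apply, hsub, (hasDerivAt_det_add_smul _ _).deriv]
  simp only [Finset.mul_sum, submatrix_apply]

theorem addCompound_term_nonneg {n p : ℕ} {A : Matrix (Fin n) (Fin n) ℝ} (hA : InM A)
    {α β : IncTuple p n} (hαβ : α ≠ β) (σ : Equiv.Perm (Fin p)) (j : Fin p) :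
    0 ≤ ((Equiv.Perm.sign σ : ℤ) : ℝ) *
      ((∏ i ∈ Finset.univ.erase j, (1 : Matrix (Fin n) (Fin n) ℝ) (α.1 (σ i)) (β.1 i)) *
        A (α.1 (σ j)) (β.1 j)) := by
  by_cases hoff : ∀ i ≠ j, α.1 (σ i) = β.1 i
  swap
  · push Not at hoff
    obtain ⟨i, hij, hi⟩ := hoff
    have hprod : ∏ i ∈ Finset.univ.erase j,
        (1 : Matrix (Fin n) (Fin n) ℝ) (α.1 (σ i)) (β.1 i) = 0 :=
      Finset.prod_eq_zero (Finset.mem_erase.mpr ⟨hij, Finset.mem_univ i⟩)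
        (Matrix.one_apply_ne hi)
    simp [hprod]
  rw [Finset.prod_eq_one fun i hi => by
    rw [hoff i (Finset.ne_of_mem_erase hi), Matrix.one_apply_eq], one_mul]
  by_cases hσ : σ = 1
  · subst hσ
    have hj : α.1 j ≠ β.1 j := fun h => hαβ <| Subtype.ext <| funext fun i => by
      rcases eq_or_ne i j with rfl | hi
      exacts [h, hoff i hi]
    simpa using hA.nonneg_of_ne hj
  · have hfar : (α.1 (σ j) : ℕ) + 1 < β.1 j ∨ (β.1 j : ℕ) + 1 < α.1 (σ j) := by
      by_contra hnear
      exact hσ (σ.eq_one_of_strictMono_comp_near α.2 β.2 hoff (by omega) (by omega))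
    simp [hA.1 _ _ hfar]

theorem addCompound_nonneg {n p : ℕ} {A : Matrix (Fin n) (Fin n) ℝ} (hA : InM A)
    {α β : IncTuple p n} (hαβ : α ≠ β) : 0 ≤ addCompound p A α β := by
  rw [addCompound_apply]
  exact Finset.sum_nonneg fun σ _ => Finset.sum_nonneg fun j _ =>
    addCompound_term_nonneg hA hαβ σ j

theorem StrictMono.update {α β : Type*} [LinearOrder α] [Preorder β] [DecidableEq α]
    {f : α → β} (hf : StrictMono f) {k : α} {v : β} (hlt : ∀ i < k, f i < v)
    (hgt : ∀ i, k < i → v < f i) : StrictMono (Function.update f k v) := by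
  intro x y hxy
  rcases eq_or_ne x k with hx | hx <;> rcases eq_or_ne y k with hy | hy
  · exact absurd (hx ▸ hy ▸ hxy) (lt_irrefl _)
  · subst hx
    simpa [Function.update_of_ne hy] using hgt y hxy
  · subst hy
    simpa [Function.update_of_ne hx] using hlt x hxy
  · simpa [Function.update_of_ne hx, Function.update_of_ne hy] using hf hxy

namespace IncTuple

variable {n p : ℕ}

def Adjacent (γ δ : IncTuple p n) : Prop :=
  ∃ k, (∀ i ≠ k, γ.1 i = δ.1 i) ∧ ((γ.1 k : ℕ) + 1 = δ.1 k ∨ (δ.1 k : ℕ) + 1 = γ.1 k)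

theorem Adjacent.symm {γ δ : IncTuple p n} (h : Adjacent γ δ) : Adjacent δ γ := by
  obtain ⟨k, hk, hstep⟩ := h
  exact ⟨k, fun i hi => (hk i hi).symm, hstep.symm⟩

theorem Adjacent.ne {γ δ : IncTuple p n} (h : Adjacent γ δ) : γ ≠ δ := by
  rintro rfl
  obtain ⟨k, -, hstep⟩ := h
  omega

def l1Dist (γ δ : IncTuple p n) : ℕ :=
  ∑ i, Nat.dist (γ.1 i) (δ.1 i)

theorem l1Dist_comm (γ δ : IncTuple p n) : l1Dist γ δ = l1Dist δ γ := by
  simp only [l1Dist, Nat.dist_comm]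

/-- Raising the last entry at which `γ` lies below `δ` keeps `γ` increasing, since every later
entry of `γ` is at least the corresponding, larger, entry of `δ`. -/
theorem exists_adjacent_l1Dist_lt (γ δ : IncTuple p n) (h : ∃ k, γ.1 k < δ.1 k) :
    ∃ γ', Adjacent γ γ' ∧ l1Dist γ' δ < l1Dist γ δ := by
  obtain ⟨k, hk, hmax⟩ := (Finset.univ.filter fun k => γ.1 k < δ.1 k).exists_max_image id
    (by simpa [Finset.filter_nonempty_iff] using h)
  simp only [Finset.mem_filter, Finset.mem_univ, true_and, id] at hk hmax
  have hle : ∀ i, k < i → δ.1 i ≤ γ.1 i := fun i hi =>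
    not_lt.mp fun h => (hmax i h).not_gt hi
  have hk' : (γ.1 k : ℕ) < δ.1 k := hk
  let v : Fin n := ⟨γ.1 k + 1, by omega⟩
  have hv : (v : ℕ) = γ.1 k + 1 := rfl
  have hmono : StrictMono (Function.update γ.1 k v) := by
    refine γ.2.update (fun i hi => (γ.2 hi).trans (Fin.lt_def.mpr (by omega))) fun i hi => ?_
    have h1 : (δ.1 k : ℕ) < δ.1 i := δ.2 hi
    have h2 : (δ.1 i : ℕ) ≤ γ.1 i := hle i hi
    exact Fin.lt_def.mpr (by omega)
  refine ⟨⟨_, hmono⟩, ⟨k, fun i hi => (Function.update_of_ne hi _ _).symm, ?_⟩, ?_⟩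
  · simp [hv]
  · refine Finset.sum_lt_sum (fun i _ => ?_) ⟨k, Finset.mem_univ _, ?_⟩
    · rcases eq_or_ne i k with rfl | hi
      · simp only [Function.update_self, Nat.dist, hv]
        omega
      · simp [Function.update_of_ne hi]
    · simp only [Function.update_self, Nat.dist, hv]
      omega

theorem reflTransGen_adjacent (γ δ : IncTuple p n) : Relation.ReflTransGen Adjacent γ δ := by
  induction h : l1Dist γ δ using Nat.strong_induction_on generalizing γ δ with
  | _ m ih =>
  by_cases hup : ∃ k, γ.1 k < δ.1 k
  · obtain ⟨γ', hadj, hlt⟩ := exists_adjacent_l1Dist_lt γ δ hup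
    exact .head hadj (ih _ (h ▸ hlt) γ' δ rfl)
  by_cases hdown : ∃ k, δ.1 k < γ.1 k
  · obtain ⟨δ', hadj, hlt⟩ := exists_adjacent_l1Dist_lt δ γ hdown
    rw [l1Dist_comm δ', l1Dist_comm δ] at hlt
    exact .tail (ih _ (h ▸ hlt) γ δ' rfl) hadj.symm
  push Not at hup hdown
  obtain rfl : γ = δ := Subtype.ext <| funext fun k => le_antisymm (hdown k) (hup k)
  exact .refl

end IncTuple

theorem addCompound_pos_of_adjacent {n p : ℕ} {A : Matrix (Fin n) (Fin n) ℝ} (hA : InMPlus A)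
    {α β : IncTuple p n} (hαβ : α.Adjacent β) : 0 < addCompound p A α β := by
  have hterm := addCompound_term_nonneg hA.inM hαβ.ne
  obtain ⟨k, hk, hstep⟩ := hαβ
  rw [addCompound_apply]
  refine Finset.sum_pos' (fun σ _ => Finset.sum_nonneg fun j _ => hterm σ j)
    ⟨1, Finset.mem_univ _, Finset.sum_pos' (fun j _ => hterm 1 j) ⟨k, Finset.mem_univ _, ?_⟩⟩
  rw [Finset.prod_eq_one fun i hi => by
    rw [Equiv.Perm.coe_one, id, hk i (Finset.ne_of_mem_erase hi), Matrix.one_apply_eq]]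
  simpa using hA.2 _ _ (by omega)

theorem stmt13_general {n : ℕ} (A : Matrix (Fin n) (Fin n) ℝ) (hA : InMPlus A) (p : ℕ) :
    (∀ α β : {s : Fin p → Fin n // StrictMono s}, α ≠ β →
      0 ≤ addCompound p A α β) ∧
    (∀ α β : {s : Fin p → Fin n // StrictMono s}, α ≠ β →
      Relation.TransGen (fun γ δ : {s : Fin p → Fin n // StrictMono s} =>
        γ ≠ δ ∧ addCompound p A γ δ ≠ 0) α β) := by
  refine ⟨fun α β hαβ => addCompound_nonneg hA.inM hαβ, fun α β hαβ => ?_⟩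
  have hpath := (Relation.reflTransGen_iff_eq_or_transGen.mp
    (IncTuple.reflTransGen_adjacent α β)).resolve_left hαβ.symm
  exact Relation.TransGen.mono
    (fun γ δ hγδ => ⟨hγδ.ne, (addCompound_pos_of_adjacent hA hγδ).ne'⟩) _ _ hpath

/-- If `n ≥ 2` and `A ∈ M⁺` (tridiagonal with positive sub- and
super-diagonal entries), then for every `p ∈ {1,…,n}` the `p`-th additive compound
`A^{[p]}` is Metzler and irreducible (the directed graph with an edge `γ → δ` whenever
`γ ≠ δ` and `A^{[p]}_{γδ} ≠ 0` is strongly connected). -/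
theorem stmt13 {n : ℕ} (hn : 2 ≤ n) (A : Matrix (Fin n) (Fin n) ℝ) (hA : InMPlus A)
    (p : ℕ) (hp1 : 1 ≤ p) (hpn : p ≤ n) :
    (∀ α β : {s : Fin p → Fin n // StrictMono s}, α ≠ β →
      0 ≤ addCompound p A α β) ∧
    (∀ α β : {s : Fin p → Fin n // StrictMono s}, α ≠ β →
      Relation.TransGen (fun γ δ : {s : Fin p → Fin n // StrictMono s} =>
        γ ≠ δ ∧ addCompound p A γ δ ≠ 0) α β) :=
  stmt13_general A hA p

end
end
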